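/- arXiv:1604.03343 — 8 statements merged into one kernel-verified Lean document; each statement's English description precedes it below -/
import Mathlib

section
/- Let P be a set of finite binary strings and let t : P → ℕ satisfy t(p) ≥ 1 for all p ∈ P. Define A = Σ_{i=1}^∞ 2^{-i} · Σ_{p ∈ P, t(p)·2^{|p|} ≤ 2^i} 2^{-|p|} and B = Σ_{p ∈ P} 2^{-2|p|}/t(p), where all sums take values in [0,∞]. Then B ≤ A ≤ 2·B. -/
/-!
Exchanging the two sums, `A = ∑_{p ∈ P} 2^{-|p|} w(t(p) 2^{|p|})` with
`w(c) = ∑_{i ≥ 1, c ≤ 2^i} 2^{-i}`. This is a geometric tail, equal to `2^{-m}` where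
`m + 1 = max(⌈log₂ c⌉, 1)` is the first phase admitting `c`; since `2^m ≤ c ≤ 2^{m+1}`,
we get `1/c ≤ w(c) ≤ 2/c`, and `2^{-|p|}/(t(p) 2^{|p|}) = 2^{-2|p|}/t(p)` is the term of `B`.
-/

open scoped ENNReal

namespace ENNReal

theorem tsum_mul_tsum_subtype_and {α β : Type*} (s : Set α) (r : β → α → Prop)
    [∀ i p, Decidable (r i p)] (a : β → ℝ≥0∞) (f : α → ℝ≥0∞) :
    ∑' i, a i * ∑' p : {p // p ∈ s ∧ r i p}, f p =
      ∑' p : {p // p ∈ s}, f p * ∑' i, if r i p then a i else 0 := by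
  calc ∑' i, a i * ∑' p : {p // p ∈ s ∧ r i p}, f p
      = ∑' i, ∑' p, {p | p ∈ s ∧ r i p}.indicator (fun p => a i * f p) p := by
        refine tsum_congr fun i => ?_
        rw [← ENNReal.tsum_mul_left]
        exact tsum_subtype {p | p ∈ s ∧ r i p} (fun p => a i * f p)
    _ = ∑' p, ∑' i, {p | p ∈ s ∧ r i p}.indicator (fun p => a i * f p) p := ENNReal.tsum_comm
    _ = ∑' p, s.indicator (fun p => f p * ∑' i, if r i p then a i else 0) p := by
        refine tsum_congr fun p => ?_
        by_cases hp : p ∈ s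
        · simp only [Set.indicator, Set.mem_ofPred_eq, hp, true_and, if_true,
            ← ENNReal.tsum_mul_left]
          exact tsum_congr fun i => by split_ifs <;> simp [mul_comm]
        · simp [Set.indicator, hp]
    _ = ∑' p : {p // p ∈ s}, f p * ∑' i, if r i p then a i else 0 := (tsum_subtype s _).symm

theorem tsum_ite_ge_inv_two_pow_succ (m : ℕ) :
    ∑' i : ℕ, (if m ≤ i then ((2 : ℝ≥0∞) ^ (i + 1))⁻¹ else 0) = ((2 : ℝ≥0∞) ^ m)⁻¹ := by
  rw [← ENNReal.summable.sum_add_tsum_nat_add' (k := m),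
    Finset.sum_eq_zero fun i hi => if_neg (by simpa using hi), zero_add]
  calc ∑' i : ℕ, (if m ≤ i + m then ((2 : ℝ≥0∞) ^ (i + m + 1))⁻¹ else 0)
      = ∑' i : ℕ, ((2 : ℝ≥0∞) ^ m)⁻¹ * 2⁻¹ ^ (i + 1) := by
        refine tsum_congr fun i => ?_
        rw [if_pos (Nat.le_add_left m i), add_right_comm, pow_add, ENNReal.mul_inv (by simp)
          (by simp), ENNReal.inv_pow, mul_comm]
    _ = ((2 : ℝ≥0∞) ^ m)⁻¹ := by
        rw [ENNReal.tsum_mul_left, ENNReal.tsum_geometric_add_one, ENNReal.one_sub_inv_two,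
          inv_inv, ENNReal.inv_mul_cancel two_ne_zero ofNat_ne_top, mul_one]

theorem inv_two_pow_two_mul_div (n c : ℕ) :
    ((2 : ℝ≥0∞) ^ (2 * n))⁻¹ / c = ((2 : ℝ≥0∞) ^ n)⁻¹ * ((c * 2 ^ n : ℕ) : ℝ≥0∞)⁻¹ := by
  push_cast
  rw [ENNReal.mul_inv (by simp) (by simp), div_eq_mul_inv, two_mul, pow_add,
    ENNReal.mul_inv (by simp) (by simp)]
  ring

end ENNReal

/-- The weight `w(c)` of the phases of FAST in which a program with `t(p) 2^{|p|} = c` halts. -/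
noncomputable def phaseWeight (c : ℕ) : ℝ≥0∞ :=
  ∑' i : ℕ, if c ≤ 2 ^ (i + 1) then ((2 : ℝ≥0∞) ^ (i + 1))⁻¹ else 0

theorem phaseWeight_eq (c : ℕ) : phaseWeight c = ((2 : ℝ≥0∞) ^ (Nat.clog 2 c - 1))⁻¹ := by
  have hphase : ∀ i : ℕ, c ≤ 2 ^ (i + 1) ↔ Nat.clog 2 c - 1 ≤ i := fun i => by
    rw [← Nat.clog_le_iff_le_pow one_lt_two]
    omega
  simp only [phaseWeight, hphase, ENNReal.tsum_ite_ge_inv_two_pow_succ]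

theorem inv_le_phaseWeight {c : ℕ} (hc : 1 ≤ c) : (c : ℝ≥0∞)⁻¹ ≤ phaseWeight c := by
  have hpow : 2 ^ (Nat.clog 2 c - 1) ≤ c := by
    rcases hc.eq_or_lt with rfl | hc
    · simp
    · exact (Nat.pow_pred_clog_lt_self one_lt_two hc).le
  rw [phaseWeight_eq]
  exact ENNReal.inv_le_inv.mpr (mod_cast hpow)

theorem phaseWeight_le (c : ℕ) : phaseWeight c ≤ 2 * (c : ℝ≥0∞)⁻¹ := by
  have hpow : c ≤ 2 * 2 ^ (Nat.clog 2 c - 1) := by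
    rw [← pow_succ']
    exact (Nat.le_pow_clog one_lt_two c).trans (Nat.pow_le_pow_right two_pos (by omega))
  calc phaseWeight c = 2 * ((2 : ℝ≥0∞) * 2 ^ (Nat.clog 2 c - 1))⁻¹ := by
        rw [phaseWeight_eq, ENNReal.mul_inv (by simp) (by simp), ← mul_assoc,
          ENNReal.mul_inv_cancel two_ne_zero ENNReal.ofNat_ne_top, one_mul]
    _ ≤ 2 * (c : ℝ≥0∞)⁻¹ := by
        gcongr
        exact_mod_cast hpow

/-- Proposition 1 of the paper, in abstract form: with `P` the set of programs
computing a fixed string and `t p` the running time of `p`, the quantity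
`A = ∑_{i=1}^∞ 2^{-i} ∑_{p ∈ P, t(p)·2^{|p|} ≤ 2^i} 2^{-|p|}` satisfies
`B ≤ A ≤ 2·B`, where `B = ∑_{p ∈ P} 2^{-2|p|}/t(p)`. -/
theorem stmt_0 (P : Set (List Bool)) (t : List Bool → ℕ)
    (ht : ∀ p ∈ P, 1 ≤ t p) :
    (∑' p : {p : List Bool // p ∈ P},
        ((2 : ENNReal) ^ (2 * p.val.length))⁻¹ / (t p.val : ENNReal)) ≤
      (∑' i : ℕ, ((2 : ENNReal) ^ (i + 1))⁻¹ *
        ∑' p : {p : List Bool // p ∈ P ∧ t p * 2 ^ p.length ≤ 2 ^ (i + 1)},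
          ((2 : ENNReal) ^ p.val.length)⁻¹) ∧
    (∑' i : ℕ, ((2 : ENNReal) ^ (i + 1))⁻¹ *
        ∑' p : {p : List Bool // p ∈ P ∧ t p * 2 ^ p.length ≤ 2 ^ (i + 1)},
          ((2 : ENNReal) ^ p.val.length)⁻¹) ≤
      2 * ∑' p : {p : List Bool // p ∈ P},
        ((2 : ENNReal) ^ (2 * p.val.length))⁻¹ / (t p.val : ENNReal) := by
  rw [ENNReal.tsum_mul_tsum_subtype_and P (fun i p => t p * 2 ^ p.length ≤ 2 ^ (i + 1))
    (fun i => ((2 : ℝ≥0∞) ^ (i + 1))⁻¹) (fun p => ((2 : ℝ≥0∞) ^ p.length)⁻¹)]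
  simp only [ENNReal.inv_two_pow_two_mul_div]
  rw [← ENNReal.tsum_mul_left]
  constructor
  · refine ENNReal.tsum_le_tsum fun p => mul_le_mul_right ?_ _
    exact inv_le_phaseWeight (Nat.mul_pos (ht p p.2) (Nat.two_pow_pos _))
  · refine ENNReal.tsum_le_tsum fun p => ?_
    calc ((2 : ℝ≥0∞) ^ p.val.length)⁻¹ * phaseWeight (t p * 2 ^ p.val.length)
        ≤ ((2 : ℝ≥0∞) ^ p.val.length)⁻¹ * (2 * ((t p * 2 ^ p.val.length : ℕ) : ℝ≥0∞)⁻¹) :=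
          mul_le_mul_right (phaseWeight_le _) _
      _ = _ := by ring
end

section
/- Let P be a set of finite binary strings and let t : P → ℕ satisfy t(p) ≥ 1 for all p ∈ P. Define A = Σ_{i=1}^∞ 2^{-i} · N_i, where N_i ∈ [0,∞] is the number of p ∈ P with t(p)·2^{|p|} ≤ 2^i (i.e., the sum over such p of 1), and define S = Σ_{p ∈ P} 2^{-|p|}/t(p), where all sums take values in [0,∞]. Then S ≤ A ≤ 2·S. -/
/-!
Sort each program `p` into the phases `i` with `c p := t(p)·2^{|p|} ≤ 2^i`. Exchanging the two
sums, `A` becomes `∑_{p ∈ P} ∑_{i ≥ ⌈log₂ c p⌉, i ≥ 1} 2^{-i}`, and the inner geometric tail equals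
`2^{-(⌈log₂ c p⌉ - 1)}`, which lies between `1 / c p` and `2 / c p`.
-/

open scoped ENNReal

lemma tsum_mul_tsum_subtype_one {α β : Type*} (P : Set α) (Q : β → α → Prop)
    [∀ i p, Decidable (Q i p)] (w : β → ℝ≥0∞) :
    ∑' i, w i * ∑' _p : {p // p ∈ P ∧ Q i p}, (1 : ℝ≥0∞) =
      ∑' p : P, ∑' i, if Q i p then w i else 0 := by
  have count (i : β) : ∑' _p : {p // p ∈ P ∧ Q i p}, (1 : ℝ≥0∞) =
      ∑' p, {p | p ∈ P ∧ Q i p}.indicator 1 p :=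
    tsum_subtype {p | p ∈ P ∧ Q i p} 1
  rw [tsum_subtype P (fun p => ∑' i, if Q i p then w i else 0)]
  simp_rw [count, ← ENNReal.tsum_mul_left]
  rw [ENNReal.tsum_comm]
  refine tsum_congr fun p => ?_
  by_cases hp : p ∈ P <;> simp [Set.indicator, hp]

lemma tsum_ite_le_inv_two_pow_succ (m : ℕ) :
    (∑' i : ℕ, if m ≤ i then ((2 : ℝ≥0∞) ^ (i + 1))⁻¹ else 0) = ((2 : ℝ≥0∞) ^ m)⁻¹ := by
  simp only [ENNReal.inv_pow]
  rw [← ENNReal.summable.sum_add_tsum_nat_add'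
      (f := fun i => if m ≤ i then (2⁻¹ : ℝ≥0∞) ^ (i + 1) else 0),
    Finset.sum_eq_zero fun i hi => if_neg (by simpa using hi), zero_add]
  have shift (i : ℕ) :
      (if m ≤ i + m then (2⁻¹ : ℝ≥0∞) ^ (i + m + 1) else 0) = 2⁻¹ ^ (i + 1) * 2⁻¹ ^ m := by
    rw [if_pos (Nat.le_add_left m i), ← pow_add, add_right_comm]
  simp only [shift, ENNReal.tsum_mul_right, ENNReal.tsum_geometric_add_one,
    ENNReal.one_sub_inv_two, inv_inv]
  rw [ENNReal.inv_mul_cancel (by simp) (by simp), one_mul]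

lemma tsum_ite_le_two_pow_succ (c : ℕ) :
    (∑' i : ℕ, if c ≤ 2 ^ (i + 1) then ((2 : ℝ≥0∞) ^ (i + 1))⁻¹ else 0) =
      ((2 : ℝ≥0∞) ^ (Nat.clog 2 c - 1))⁻¹ := by
  rw [← tsum_ite_le_inv_two_pow_succ]
  refine tsum_congr fun i => if_congr ?_ rfl rfl
  rw [← Nat.clog_le_iff_le_pow one_lt_two]
  omega

lemma two_pow_clog_pred_le {c : ℕ} (hc : 1 ≤ c) : 2 ^ (Nat.clog 2 c - 1) ≤ c := by
  rcases hc.eq_or_lt with rfl | hc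
  · simp
  · exact (Nat.pow_pred_clog_lt_self one_lt_two hc).le

lemma le_two_pow_clog_pred_mul_two (c : ℕ) : c ≤ 2 ^ (Nat.clog 2 c - 1) * 2 :=
  calc c ≤ 2 ^ Nat.clog 2 c := Nat.le_pow_clog one_lt_two c
    _ ≤ 2 ^ (Nat.clog 2 c - 1 + 1) := Nat.pow_le_pow_right two_pos (by omega)
    _ = 2 ^ (Nat.clog 2 c - 1) * 2 := pow_succ _ _

lemma inv_natCast_le_inv_two_pow_clog_pred {c : ℕ} (hc : 1 ≤ c) :
    (c : ℝ≥0∞)⁻¹ ≤ ((2 : ℝ≥0∞) ^ (Nat.clog 2 c - 1))⁻¹ :=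
  ENNReal.inv_le_inv.2 (by exact_mod_cast two_pow_clog_pred_le hc)

lemma inv_two_pow_clog_pred_le (c : ℕ) :
    ((2 : ℝ≥0∞) ^ (Nat.clog 2 c - 1))⁻¹ ≤ 2 * (c : ℝ≥0∞)⁻¹ := by
  rw [← div_eq_mul_inv, ENNReal.le_div_iff_mul_le (by simp) (by simp),
    ENNReal.inv_mul_le_iff (by simp) (by simp)]
  exact_mod_cast le_two_pow_clog_pred_mul_two c

lemma inv_two_pow_div_natCast (n t : ℕ) :
    ((2 : ℝ≥0∞) ^ n)⁻¹ / t = ((t * 2 ^ n : ℕ) : ℝ≥0∞)⁻¹ := by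
  rw [Nat.cast_mul, ENNReal.mul_inv (by simp) (by simp), div_eq_mul_inv, mul_comm]
  norm_cast

/-- Proposition 2 of the paper, in abstract form: with `P` the set of programs
computing a fixed string and `t p` the running time of `p`, the quantity
`A = ∑_{i=1}^∞ 2^{-i} · #{p ∈ P : t(p)·2^{|p|} ≤ 2^i}` satisfies
`S ≤ A ≤ 2·S`, where `S = ∑_{p ∈ P} 2^{-|p|}/t(p)`. -/
theorem stmt_1 (P : Set (List Bool)) (t : List Bool → ℕ)
    (ht : ∀ p ∈ P, 1 ≤ t p) :
    (∑' p : {p : List Bool // p ∈ P},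
        ((2 : ENNReal) ^ p.val.length)⁻¹ / (t p.val : ENNReal)) ≤
      (∑' i : ℕ, ((2 : ENNReal) ^ (i + 1))⁻¹ *
        ∑' _p : {p : List Bool // p ∈ P ∧ t p * 2 ^ p.length ≤ 2 ^ (i + 1)},
          (1 : ENNReal)) ∧
    (∑' i : ℕ, ((2 : ENNReal) ^ (i + 1))⁻¹ *
        ∑' _p : {p : List Bool // p ∈ P ∧ t p * 2 ^ p.length ≤ 2 ^ (i + 1)},
          (1 : ENNReal)) ≤
      2 * ∑' p : {p : List Bool // p ∈ P},
        ((2 : ENNReal) ^ p.val.length)⁻¹ / (t p.val : ENNReal) := by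
  rw [tsum_mul_tsum_subtype_one P (fun i p => t p * 2 ^ p.length ≤ 2 ^ (i + 1))]
  simp only [tsum_ite_le_two_pow_succ, inv_two_pow_div_natCast]
  refine ⟨ENNReal.tsum_le_tsum fun p => inv_natCast_le_inv_two_pow_clog_pred ?_, ?_⟩
  · exact one_le_mul_of_one_le_of_one_le (ht p p.2) Nat.one_le_two_pow
  · rw [← ENNReal.tsum_mul_left]
    exact ENNReal.tsum_le_tsum fun p => inv_two_pow_clog_pred_le _
end

section
/- Fix n ∈ ℕ. Let μ : {0,1}^n → [0,1] satisfy Σ_{x ∈ {0,1}^n} μ(x) = 1, and let S : {0,1}^n → [0,∞) satisfy S(x) ≥ c·μ(x)/(a + b·(-log₂ μ(x)))^d for every x with μ(x) > 0, where c > 0, a ≥ 1, b ≥ 0 and d ≥ 1. Then the relative entropy D_n(μ‖S) := Σ_{x ∈ {0,1}^n, μ(x)>0} μ(x)·ln(μ(x)/S(x)) satisfies D_n(μ‖S) ≤ d·ln(a + b·n) − ln c. -/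
/-!
Bound each term pointwise: `log (μ x / S x) ≤ d · log (a + b · t x) − log c` with
`t x = −log₂ μ x`. Averaging against `μ` and applying Jensen's inequality to the concave `log`
gives `d · log (a + b · H) − log c`, where `H = ∑ μ x · t x` is the Shannon entropy of `μ`
in bits; finally `H ≤ n` since `μ` lives on a set of `2ⁿ` points.
-/

open Real Finset

theorem sum_negMulLog_le_log_card {ι : Type*} [Fintype ι] (w : ι → ℝ) (hw₀ : ∀ i, 0 ≤ w i)
    (hw₁ : ∑ i, w i = 1) : ∑ i, negMulLog (w i) ≤ log (Fintype.card ι) := by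
  have hι : Nonempty ι := by
    by_contra h
    simp [not_nonempty_iff.mp h] at hw₁
  have hN : (0 : ℝ) < Fintype.card ι := by exact_mod_cast Fintype.card_pos
  -- Jensen for the concave `negMulLog` with uniform weights
  have h := concaveOn_negMulLog.le_map_sum (t := univ) (w := fun _ ↦ (Fintype.card ι : ℝ)⁻¹)
    (p := w) (fun _ _ ↦ by positivity) (by simp [hN.ne']) (fun i _ ↦ Set.mem_Ici.mpr (hw₀ i))
  simp only [smul_eq_mul, ← mul_sum, hw₁, mul_one] at h
  rw [negMulLog, neg_mul, log_inv, mul_neg, neg_neg] at h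
  simpa only [← div_eq_inv_mul, div_le_div_iff_of_pos_right hN] using h

theorem sum_mul_neg_logb_le_logb_card {ι : Type*} [Fintype ι] (w : ι → ℝ) (hw₀ : ∀ i, 0 ≤ w i)
    (hw₁ : ∑ i, w i = 1) : ∑ i, w i * -logb 2 (w i) ≤ logb 2 (Fintype.card ι) := by
  have h := div_le_div_of_nonneg_right (sum_negMulLog_le_log_card w hw₀ hw₁)
    (log_nonneg one_le_two)
  simpa only [sum_div, negMulLog, logb, neg_mul, mul_neg, mul_div_assoc, neg_div] using h

theorem sum_mul_log_le_log_sum_mul {ι : Type*} (s : Finset ι) (w p : ι → ℝ)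
    (hw₀ : ∀ i ∈ s, 0 ≤ w i) (hw₁ : ∑ i ∈ s, w i = 1) (hp : ∀ i ∈ s, 0 < p i) :
    ∑ i ∈ s, w i * log (p i) ≤ log (∑ i ∈ s, w i * p i) :=
  strictConcaveOn_log_Ioi.concaveOn.le_map_sum hw₀ hw₁ hp

theorem log_div_le_of_mul_div_rpow_le {m s c q d : ℝ} (hm : 0 < m) (hc : 0 < c) (hq : 0 < q)
    (h : c * m / q ^ d ≤ s) : log (m / s) ≤ d * log q - log c := by
  have hs : 0 < s := lt_of_lt_of_le (by positivity) h
  have hqd : 0 < q ^ d := rpow_pos_of_pos hq d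
  rw [← log_rpow hq, ← log_div hqd.ne' hc.ne']
  apply log_le_log (by positivity)
  rw [div_le_div_iff₀ hs hc]
  rw [div_le_iff₀ hqd] at h
  linarith

theorem stmt_6_general (n : ℕ) (μ S : (Fin n → Bool) → ℝ) (c a b d : ℝ)
    (hμ0 : ∀ x, 0 ≤ μ x) (hμsum : ∑ x, μ x = 1)
    (hc : 0 < c) (ha : 1 ≤ a) (hb : 0 ≤ b) (hd : 1 ≤ d)
    (hS : ∀ x, 0 < μ x →
      c * μ x / (a + b * (-Real.logb 2 (μ x))) ^ d ≤ S x) :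
    (∑ x, if 0 < μ x then μ x * Real.log (μ x / S x) else 0) ≤
      d * Real.log (a + b * n) - Real.log c := by
  set t : (Fin n → Bool) → ℝ := fun x ↦ -logb 2 (μ x)
  have ht : ∀ x, 0 ≤ t x := fun x ↦ neg_nonneg.mpr <| logb_nonpos one_lt_two (hμ0 x)
    (hμsum ▸ single_le_sum (fun y _ ↦ hμ0 y) (mem_univ x))
  have hpos : ∀ x, 0 < a + b * t x := fun x ↦ by nlinarith [ht x]
  have hentropy : ∑ x, μ x * t x ≤ n := by
    have h := sum_mul_neg_logb_le_logb_card μ hμ0 hμsum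
    rwa [Fintype.card_fun, Fintype.card_bool, Fintype.card_fin, Nat.cast_pow, Nat.cast_ofNat,
      logb_pow, logb_self_eq_one one_lt_two, mul_one] at h
  have hpoint : ∀ x, (if 0 < μ x then μ x * log (μ x / S x) else 0) ≤
      μ x * (d * log (a + b * t x) - log c) := fun x ↦ by
    split_ifs with hx
    · exact mul_le_mul_of_nonneg_left
        (log_div_le_of_mul_div_rpow_le hx hc (hpos x) (hS x hx)) hx.le
    · simp [le_antisymm (not_lt.mp hx) (hμ0 x)]
  have hmean : ∑ x, μ x * (a + b * t x) = a + b * ∑ x, μ x * t x := by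
    simp only [mul_add, sum_add_distrib, ← sum_mul, hμsum, one_mul, mul_sum, mul_left_comm]
  calc (∑ x, if 0 < μ x then μ x * log (μ x / S x) else 0)
      ≤ ∑ x, μ x * (d * log (a + b * t x) - log c) := sum_le_sum fun x _ ↦ hpoint x
    _ = d * ∑ x, μ x * log (a + b * t x) - log c := by
        simp only [mul_sub, sum_sub_distrib, ← sum_mul, hμsum, one_mul, mul_sum, mul_left_comm]
    _ ≤ d * log (a + b * ∑ x, μ x * t x) - log c := by
        rw [← hmean]
        gcongr
        exact sum_mul_log_le_log_sum_mul univ μ _ (fun x _ ↦ hμ0 x) hμsum fun x _ ↦ hpos x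
    _ ≤ d * log (a + b * n) - log c := by
        gcongr
        exact add_pos_of_pos_of_nonneg (by linarith)
          (mul_nonneg hb (sum_nonneg fun x _ ↦ mul_nonneg (hμ0 x) (ht x)))

/-- The core entropy estimate in the proof of Theorem 1 of the paper: if `μ` is
a probability distribution on `{0,1}^n` and `S(x) ≥ c·μ(x)/(a + b·(−log₂ μ(x)))^d`
whenever `μ(x) > 0`, then the relative entropy
`D_n(μ‖S) = ∑_{μ(x)>0} μ(x)·ln(μ(x)/S(x))` is at most `d·ln(a + b·n) − ln c`. -/
theorem stmt_6 (n : ℕ) (μ S : (Fin n → Bool) → ℝ) (c a b d : ℝ)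
    (hμ0 : ∀ x, 0 ≤ μ x) (hμ1 : ∀ x, μ x ≤ 1) (hμsum : ∑ x, μ x = 1)
    (hS0 : ∀ x, 0 ≤ S x)
    (hc : 0 < c) (ha : 1 ≤ a) (hb : 0 ≤ b) (hd : 1 ≤ d)
    (hS : ∀ x, 0 < μ x →
      c * μ x / (a + b * (-Real.logb 2 (μ x))) ^ d ≤ S x) :
    (∑ x, if 0 < μ x then μ x * Real.log (μ x / S x) else 0) ≤
      d * Real.log (a + b * n) - Real.log c :=
  stmt_6_general n μ S c a b d hμ0 hμsum hc ha hb hd hS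
end

section
/- Fix n ∈ ℕ. Let μ be a measure on finite binary strings (μ(ε) = 1 and μ(x) = μ(x0) + μ(x1) for all x), let ℓ : {1,…,n} × {0,1} × {0,1} → [0,1] be a loss function, and let S be a semimeasure with S(x) > 0 whenever μ(x) > 0 and |x| ≤ n. For a semimeasure ρ, call Λ : {0,1}^{<n} → {0,1} a ρ-predictor if for every string x of length t−1 ≤ n−1 with ρ(x) > 0, Λ(x) minimises y ↦ Σ_{b ∈ {0,1}} ρ(b|x)·ℓ(t, b, y). For a predictor Λ, let L^Λ_{nμ} = Σ_{x ∈ {0,1}^n} μ(x)·Σ_{t=1}^n ℓ(t, x_t, Λ(x_{1:t−1})). Suppose moreover that S(x) ≥ c·μ(x)/(a + b·(−log₂ μ(x)))^d for every x of length n with μ(x) > 0, where c > 0, a ≥ 1, b ≥ 0, d ≥ 1. Then for any μ-predictor Λ_μ and any S-predictor Λ_S, L^{Λ_S}_{nμ} − L^{Λ_μ}_{nμ} ≤ 2·D_n + 2·√(L^{Λ_μ}_{nμ}·D_n), where D_n = d·ln(a + b·n) − ln c. -/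
/-- A semimeasure: `ν(ε) ≤ 1` and `ν(x0) + ν(x1) ≤ ν(x)`, with nonnegative values. -/
def IsSemimeasure (ν : List Bool → ℝ) : Prop :=
  (∀ x, 0 ≤ ν x) ∧ ν [] ≤ 1 ∧ ∀ x, ν (x ++ [false]) + ν (x ++ [true]) ≤ ν x

/-- A measure: `μ(ε) = 1` and `μ(x0) + μ(x1) = μ(x)`, with nonnegative values. -/
def IsMeasure (μ : List Bool → ℝ) : Prop :=
  (∀ x, 0 ≤ μ x) ∧ μ [] = 1 ∧ ∀ x, μ (x ++ [false]) + μ (x ++ [true]) = μ x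

/-- `Λ` is a `ρ`-predictor (for horizon `n` and loss `ℓ`): on every string `x` of
length `t − 1 ≤ n − 1` with `ρ(x) > 0`, `Λ(x)` minimises
`y ↦ ∑_b ρ(b|x)·ℓ(t, b, y)`. -/
def IsPredictor (n : ℕ) (ℓ : ℕ → Bool → Bool → ℝ) (ρ : List Bool → ℝ)
    (Λ : List Bool → Bool) : Prop :=
  ∀ x : List Bool, x.length < n → 0 < ρ x → ∀ y : Bool,
    ρ (x ++ [false]) / ρ x * ℓ (x.length + 1) false (Λ x) +
        ρ (x ++ [true]) / ρ x * ℓ (x.length + 1) true (Λ x) ≤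
      ρ (x ++ [false]) / ρ x * ℓ (x.length + 1) false y +
        ρ (x ++ [true]) / ρ x * ℓ (x.length + 1) true y

/-- `Loss n ℓ μ Λ = L^Λ_{nμ} = ∑_{x ∈ {0,1}^n} μ(x) ∑_{t=1}^n ℓ(t, x_t, Λ(x_{1:t−1}))`,
the total `μ`-expected loss of predictor `Λ` over the first `n` steps. -/
def Loss (n : ℕ) (ℓ : ℕ → Bool → Bool → ℝ) (μ : List Bool → ℝ)
    (Λ : List Bool → Bool) : ℝ :=
  ∑ v : Fin n → Bool, μ (List.ofFn v) *
    ∑ t : Fin n, ℓ ((t : ℕ) + 1) (v t) (Λ ((List.ofFn v).take t))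

open Real Finset Filter Topology

/-!
Expand both losses as sums over the nodes `w` of the binary prediction tree. At a node, the
`S`-optimality of `Λ_S` says `∑_b S(wb)(ℓ_S − ℓ_μ) ≤ 0`, so `1 + κ(ℓ_S − ℓ_μ)` is an admissible
test function in the variational (Gibbs) lower bound for the one-step divergence `K(w)`.
A quadratic lower bound on `log (1 + x)` turns this into
`loss_S(w) − loss_μ(w) ≤ 2 K(w) / (κ(2 − κ)) + κ loss_μ(w) / (1 − κ)` for every `κ ∈ (0, 1)`.
Being linear, this sums over the tree; the one-step divergences telescope to at most
`D_n(μ‖S) ≤ d ln(a + b n) − ln c` (domination, Jensen, and the `n`-bit entropy bound), and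
optimising over `κ` gives `2 D + 2 √(L D)`.
-/

lemma sub_le_mul_log_div {y z : ℝ} (hy : 0 ≤ y) (hz : 0 ≤ z) (hyz : 0 < y → 0 < z) :
    y - z ≤ y * log (y / z) := by
  rcases hy.eq_or_lt with rfl | hy
  · simpa using hz
  · have hz := hyz hy
    calc y - z = y * (1 - (y / z)⁻¹) := by field_simp
      _ ≤ y * log (y / z) := by gcongr; exact one_sub_inv_le_log_of_pos (div_pos hy hz)

lemma mul_log_div_mul {y z r : ℝ} (hy : 0 ≤ y) (hyz : 0 < y → 0 < z) (hr : 0 < r) :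
    y * log (y / (z * r)) = y * log (y / z) - y * log r := by
  rcases hy.eq_or_lt with rfl | hy
  · simp
  · rw [← div_div, log_div (div_pos hy (hyz hy)).ne' hr.ne', mul_sub]

lemma sub_sq_div_two_le_log_one_add {x : ℝ} (hx : 0 ≤ x) : x - x ^ 2 / 2 ≤ log (1 + x) := by
  refine le_trans ?_ (le_log_one_add_of_nonneg hx)
  rw [le_div_iff₀ (by linarith)]
  nlinarith [pow_nonneg hx 3]

lemma neg_sub_sq_div_le_log_one_sub {t : ℝ} (ht₀ : 0 ≤ t) (ht₁ : t < 1) :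
    -t - t ^ 2 / (2 * (1 - t)) ≤ log (1 - t) := by
  set w := t + t ^ 2 / (2 * (1 - t)) with hw_def
  have hw : w * (2 * (1 - t)) = t * (2 - t) := by
    rw [hw_def]; field_simp [show 1 - t ≠ 0 by linarith]; ring
  have hw₀ : 0 ≤ w := by positivity
  have hexp : 1 ≤ (1 - t) * exp w := by
    have := quadratic_le_exp_of_nonneg hw₀
    nlinarith [mul_nonneg hw₀ (sq_nonneg t), mul_nonneg ht₀ hw₀]
  have := log_nonneg hexp
  rw [log_mul (by linarith) (exp_pos w).ne', log_exp] at this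
  linarith

lemma log_one_add_mul_ge {κ δ : ℝ} (hκ₀ : 0 ≤ κ) (hκ₁ : κ < 1) (hδ : |δ| ≤ 1) :
    κ * δ - κ ^ 2 * (δ⁺ / 2 + δ⁻ / (2 * (1 - κ))) ≤ log (1 + κ * δ) := by
  obtain ⟨hδl, hδu⟩ := abs_le.1 hδ
  rcases le_total 0 δ with h | h
  · rw [posPart_eq_self.2 h, negPart_eq_zero.2 h, zero_div, add_zero]
    have := sub_sq_div_two_le_log_one_add (mul_nonneg hκ₀ h)
    nlinarith [mul_nonneg (sq_nonneg κ) (mul_nonneg h (sub_nonneg.2 hδu))]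
  · rw [posPart_eq_zero.2 h, negPart_eq_neg.2 h, zero_div, zero_add]
    have key := neg_sub_sq_div_le_log_one_sub (t := -(κ * δ)) (by nlinarith) (by nlinarith)
    rw [neg_neg, neg_sq, sub_neg_eq_add] at key
    have : (κ * δ) ^ 2 / (2 * (1 + κ * δ)) ≤ κ ^ 2 * (-δ / (2 * (1 - κ))) := by
      rw [mul_div_assoc', div_le_div_iff₀ (by nlinarith) (by linarith)]
      nlinarith [mul_nonneg (mul_nonneg (sq_nonneg κ) (neg_nonneg.2 h)) (neg_le_iff_add_nonneg.1 hδl)]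
    linarith

lemma mul_add_mul_le_of_log_le {m₀ m₁ δ₀ δ₁ K N κ : ℝ} (hm₀ : 0 ≤ m₀) (hm₁ : 0 ≤ m₁)
    (hδ₀ : |δ₀| ≤ 1) (hδ₁ : |δ₁| ≤ 1) (hκ₀ : 0 < κ) (hκ₁ : κ < 1)
    (hK : m₀ * log (1 + κ * δ₀) + m₁ * log (1 + κ * δ₁) ≤ K)
    (hN : m₀ * δ₀⁻ + m₁ * δ₁⁻ ≤ N) :
    m₀ * δ₀ + m₁ * δ₁ ≤ 2 * K / (κ * (2 - κ)) + κ * N / (1 - κ) := by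
  set A := m₀ * δ₀ + m₁ * δ₁
  set B := m₀ * δ₀⁻ + m₁ * δ₁⁻
  have h₁κ : 0 < 1 - κ := by linarith
  have hB : 0 ≤ B := by positivity
  have hlow : κ * A - κ ^ 2 * ((A + B) / 2 + B / (2 * (1 - κ))) ≤ K := by
    refine le_trans (le_of_eq ?_) (le_trans (add_le_add
      (mul_le_mul_of_nonneg_left (log_one_add_mul_ge hκ₀.le hκ₁ hδ₀) hm₀)
      (mul_le_mul_of_nonneg_left (log_one_add_mul_ge hκ₀.le hκ₁ hδ₁) hm₁)) hK)
    have e₀ := posPart_sub_negPart δ₀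
    have e₁ := posPart_sub_negPart δ₁
    simp only [A, B]
    linear_combination (κ ^ 2 * m₀ / 2) * e₀ + (κ ^ 2 * m₁ / 2) * e₁
  calc A = 2 * (κ * A - κ ^ 2 * ((A + B) / 2 + B / (2 * (1 - κ)))) / (κ * (2 - κ))
        + κ * B / (1 - κ) := by
        field_simp [show 2 - κ ≠ 0 by linarith]
        ring
    _ ≤ 2 * K / (κ * (2 - κ)) + κ * N / (1 - κ) := by
        gcongr
        nlinarith

lemma le_two_mul_add_two_sqrt_of_pos {A D M : ℝ} (hD : 0 < D) (hM : 0 < M)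
    (h : ∀ κ, 0 < κ → κ < 1 → A ≤ 2 * D / (κ * (2 - κ)) + κ * M / (1 - κ)) :
    A ≤ 2 * D + 2 * √(M * D) := by
  obtain ⟨u, hu, rfl⟩ : ∃ u, 0 < u ∧ u ^ 2 = D := ⟨√D, sqrt_pos.2 hD, sq_sqrt hD.le⟩
  obtain ⟨v, hv, rfl⟩ : ∃ v, 0 < v ∧ v ^ 2 = M := ⟨√M, sqrt_pos.2 hM, sq_sqrt hM.le⟩
  have huv : 0 < u + v := by positivity
  have hu2v : 0 < u + 2 * v := by positivity
  refine (h (u / (u + v)) (by positivity) ((div_lt_one huv).2 (by linarith))).trans ?_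
  rw [show v ^ 2 * u ^ 2 = (u * v) ^ 2 by ring, sqrt_sq (by positivity)]
  have e₁ : 2 * u ^ 2 / (u / (u + v) * (2 - u / (u + v))) = 2 * u * (u + v) ^ 2 / (u + 2 * v) := by
    rw [show u / (u + v) * (2 - u / (u + v)) = u * (u + 2 * v) / (u + v) ^ 2 by
      field_simp; ring]
    field_simp
  have e₂ : u / (u + v) * v ^ 2 / (1 - u / (u + v)) = u * v := by
    field_simp [hv.ne']
    ring
  have : 2 * u * (u + v) ^ 2 / (u + 2 * v) ≤ 2 * u ^ 2 + u * v := by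
    rw [div_le_iff₀ hu2v]
    nlinarith [mul_pos (mul_pos hu hu) hv]
  linarith

lemma le_two_mul_add_two_sqrt_of_forall_kappa {A D M : ℝ} (hD : 0 ≤ D) (hM : 0 ≤ M)
    (h : ∀ κ, 0 < κ → κ < 1 → A ≤ 2 * D / (κ * (2 - κ)) + κ * M / (1 - κ)) :
    A ≤ 2 * D + 2 * √(M * D) := by
  -- perturb `D` and `M` to make them positive, then let the perturbation tend to `0`
  have hε : ∀ ε > 0, A ≤ 2 * (D + ε) + 2 * √((M + ε) * (D + ε)) := by
    intro ε hε
    refine le_two_mul_add_two_sqrt_of_pos (by positivity) (by positivity) fun κ hκ₀ hκ₁ ↦ ?_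
    have : 0 < 2 - κ := by linarith
    have : 0 < 1 - κ := by linarith
    exact (h κ hκ₀ hκ₁).trans (by gcongr <;> linarith)
  have hlim : Tendsto (fun ε ↦ 2 * (D + ε) + 2 * √((M + ε) * (D + ε))) (𝓝[>] 0)
      (𝓝 (2 * D + 2 * √(M * D))) := by
    have : Continuous fun ε ↦ 2 * (D + ε) + 2 * √((M + ε) * (D + ε)) := by fun_prop
    simpa using (this.tendsto 0).mono_left nhdsWithin_le_nhds
  exact ge_of_tendsto hlim (eventually_nhdsWithin_of_forall hε)

lemma sum_ofFn_succ {M : Type*} [AddCommMonoid M] (k : ℕ) (f : List Bool → M) :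
    ∑ v : Fin (k + 1) → Bool, f (List.ofFn v) =
      ∑ v : Fin k → Bool, (f (List.ofFn v ++ [false]) + f (List.ofFn v ++ [true])) := by
  rw [← (Fin.snocEquiv fun _ ↦ Bool).sum_comp, Fintype.sum_prod_type, Fintype.sum_bool,
    ← sum_add_distrib]
  refine sum_congr rfl fun v _ ↦ ?_
  rw [add_comm]
  simp only [Fin.snocEquiv_apply, List.ofFn_succ', Fin.snoc_castSucc, Fin.snoc_last,
    List.concat_eq_append]

namespace IsMeasure

variable {μ : List Bool → ℝ}

lemma nonneg (hμ : IsMeasure μ) (x : List Bool) : 0 ≤ μ x := hμ.1 x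

lemma apply_append_false_add (hμ : IsMeasure μ) (x : List Bool) :
    μ (x ++ [false]) + μ (x ++ [true]) = μ x := hμ.2.2 x

lemma le_one (hμ : IsMeasure μ) (x : List Bool) : μ x ≤ 1 := by
  induction x using List.reverseRecOn with
  | nil => exact hμ.2.1.le
  | append_singleton x b ih =>
    have := hμ.apply_append_false_add x
    cases b <;> linarith [hμ.nonneg (x ++ [false]), hμ.nonneg (x ++ [true])]

lemma sum_ofFn_mul_take (hμ : IsMeasure μ) {k m : ℕ} (hkm : k ≤ m) (H : List Bool → ℝ) :
    ∑ v : Fin m → Bool, μ (List.ofFn v) * H ((List.ofFn v).take k) =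
      ∑ v : Fin k → Bool, μ (List.ofFn v) * H (List.ofFn v) := by
  induction m, hkm using Nat.le_induction with
  | base => exact sum_congr rfl fun v _ ↦ by rw [List.take_of_length_le (by simp)]
  | succ m hkm ih =>
    rw [← ih]
    refine (sum_ofFn_succ m fun x ↦ μ x * H (x.take k)).trans (sum_congr rfl fun v _ ↦ ?_)
    have hk : k ≤ (List.ofFn v).length := by simpa
    rw [List.take_append_of_le_length hk, List.take_append_of_le_length hk, ← add_mul,
      hμ.apply_append_false_add]

lemma sum_ofFn (hμ : IsMeasure μ) (k : ℕ) : ∑ v : Fin k → Bool, μ (List.ofFn v) = 1 := by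
  simpa [hμ.2.1] using hμ.sum_ofFn_mul_take (Nat.zero_le k) fun _ ↦ 1

end IsMeasure

def nodeLoss (ℓ : ℕ → Bool → Bool → ℝ) (μ : List Bool → ℝ) (Λ : List Bool → Bool)
    (w : List Bool) : ℝ :=
  μ (w ++ [false]) * ℓ (w.length + 1) false (Λ w) + μ (w ++ [true]) * ℓ (w.length + 1) true (Λ w)

lemma IsMeasure.loss_eq_sum_nodeLoss {μ : List Bool → ℝ} (hμ : IsMeasure μ) (n : ℕ)
    (ℓ : ℕ → Bool → Bool → ℝ) (Λ : List Bool → Bool) :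
    Loss n ℓ μ Λ = ∑ t ∈ range n, ∑ v : Fin t → Bool, nodeLoss ℓ μ Λ (List.ofFn v) := by
  rw [Loss, ← Fin.sum_univ_eq_sum_range]
  simp_rw [mul_sum]
  rw [sum_comm]
  refine sum_congr rfl fun t _ ↦ ?_
  -- the loss at step `t + 1` only depends on the prefix of length `t + 1`
  let H : List Bool → ℝ := fun x ↦ ℓ x.length (x.getLastD false) (Λ x.dropLast)
  calc ∑ v : Fin n → Bool, μ (List.ofFn v) * ℓ (t + 1) (v t) (Λ ((List.ofFn v).take t))
      = ∑ v : Fin n → Bool, μ (List.ofFn v) * H ((List.ofFn v).take (t + 1)) := by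
        refine sum_congr rfl fun v _ ↦ ?_
        rw [List.take_add_one, List.getElem?_ofFn]
        simp [H]
    _ = ∑ v : Fin (t + 1) → Bool, μ (List.ofFn v) * H (List.ofFn v) :=
        hμ.sum_ofFn_mul_take t.isLt H
    _ = ∑ v : Fin t → Bool, nodeLoss ℓ μ Λ (List.ofFn v) := by
        refine (sum_ofFn_succ t fun x ↦ μ x * H x).trans (sum_congr rfl fun v _ ↦ ?_)
        simp [H, nodeLoss]

-- `∑_{|x| = n} klTerm μ S x` is `D_n(μ‖S)`; where `μ x = 0` the factor `μ x` kills the junk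
-- value of `log`.
noncomputable def klTerm (μ S : List Bool → ℝ) (x : List Bool) : ℝ := μ x * log (μ x / S x)

noncomputable def nodeKL (μ S : List Bool → ℝ) (w : List Bool) : ℝ :=
  klTerm μ S (w ++ [false]) + klTerm μ S (w ++ [true]) - klTerm μ S w

lemma sum_range_sum_nodeKL (μ S : List Bool → ℝ) (n : ℕ) :
    ∑ t ∈ range n, ∑ v : Fin t → Bool, nodeKL μ S (List.ofFn v) =
      ∑ v : Fin n → Bool, klTerm μ S (List.ofFn v) - klTerm μ S [] := by
  have hstep : ∀ t, ∑ v : Fin t → Bool, nodeKL μ S (List.ofFn v) =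
      ∑ v : Fin (t + 1) → Bool, klTerm μ S (List.ofFn v) -
        ∑ v : Fin t → Bool, klTerm μ S (List.ofFn v) := by
    intro t
    rw [sum_ofFn_succ, ← sum_sub_distrib]
    rfl
  simp_rw [hstep]
  rw [sum_range_sub (fun t ↦ ∑ v : Fin t → Bool, klTerm μ S (List.ofFn v))]
  simp

lemma IsMeasure.mul_log_add_mul_log_le_nodeKL {μ S : List Bool → ℝ} (hμ : IsMeasure μ)
    (hS : ∀ x, 0 ≤ S x) {w : List Bool}
    (hpos : ∀ x : List Bool, x.length ≤ w.length + 1 → 0 < μ x → 0 < S x)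
    {x₀ x₁ : ℝ} (hx₀ : -1 < x₀) (hx₁ : -1 < x₁)
    (h : S (w ++ [false]) * (1 + x₀) + S (w ++ [true]) * (1 + x₁) ≤ S w) :
    μ (w ++ [false]) * log (1 + x₀) + μ (w ++ [true]) * log (1 + x₁) ≤ nodeKL μ S w := by
  have hsum := hμ.apply_append_false_add w
  have hμ₀ := hμ.nonneg (w ++ [false])
  have hμ₁ := hμ.nonneg (w ++ [true])
  rcases (hμ.nonneg w).eq_or_lt with hw | hw
  · have h₀ : μ (w ++ [false]) = 0 := by linarith
    have h₁ : μ (w ++ [true]) = 0 := by linarith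
    simp [nodeKL, klTerm, h₀, h₁, ← hw]
  have hSw := hpos w (by omega) hw
  have hpos₀ := hpos (w ++ [false]) (by simp)
  have hpos₁ := hpos (w ++ [true]) (by simp)
  -- Gibbs' inequality against the sub-probability `S (w ++ [b]) * (1 + x_b) * μ w / S w`
  set r := μ w / S w
  have hr : 0 < r := div_pos hw hSw
  have gibbs : ∀ {m s x : ℝ}, 0 ≤ m → 0 ≤ s → (0 < m → 0 < s) → -1 < x →
      m - s * ((1 + x) * r) ≤ m * log (m / s) - m * log (1 + x) - m * log r := by
    intro m s x hm hs hms hx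
    have h1x : 0 < 1 + x := by linarith
    calc m - s * ((1 + x) * r)
        ≤ m * log (m / (s * ((1 + x) * r))) :=
          sub_le_mul_log_div hm (by positivity) fun hm ↦ by have := hms hm; positivity
      _ = _ := by
          rw [mul_log_div_mul hm hms (by positivity), log_mul h1x.ne' hr.ne']
          ring
  have g₀ := gibbs hμ₀ (hS _) hpos₀ hx₀
  have g₁ := gibbs hμ₁ (hS _) hpos₁ hx₁
  have hrS : r * S w = μ w := by simp only [r]; field_simp
  have hkl : klTerm μ S w = (μ (w ++ [false]) + μ (w ++ [true])) * log r := by rw [hsum]; rfl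
  have := mul_le_mul_of_nonneg_left h hr.le
  simp only [nodeKL, hkl]
  simp only [klTerm]
  linarith

lemma IsPredictor.mul_sub_add_mul_sub_nonpos {n : ℕ} {ℓ : ℕ → Bool → Bool → ℝ}
    {S : List Bool → ℝ} {Λ : List Bool → Bool} (hΛ : IsPredictor n ℓ S Λ)
    (hS : IsSemimeasure S) {w : List Bool} (hw : w.length < n) (y : Bool) :
    S (w ++ [false]) * (ℓ (w.length + 1) false (Λ w) - ℓ (w.length + 1) false y) +
      S (w ++ [true]) * (ℓ (w.length + 1) true (Λ w) - ℓ (w.length + 1) true y) ≤ 0 := by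
  obtain ⟨hS₀, -, hS₂⟩ := hS
  rcases (hS₀ w).eq_or_lt with h | h
  · have h₀ : S (w ++ [false]) = 0 := by linarith [hS₀ (w ++ [false]), hS₀ (w ++ [true]), hS₂ w]
    have h₁ : S (w ++ [true]) = 0 := by linarith [hS₀ (w ++ [false]), hS₀ (w ++ [true]), hS₂ w]
    simp [h₀, h₁]
  · have := hΛ w hw h y
    simp only [div_mul_eq_mul_div, ← add_div, div_le_div_iff_of_pos_right h] at this
    linarith

lemma IsMeasure.nodeKL_nonneg {μ S : List Bool → ℝ} (hμ : IsMeasure μ) (hS : IsSemimeasure S)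
    {w : List Bool} (hpos : ∀ x : List Bool, x.length ≤ w.length + 1 → 0 < μ x → 0 < S x) :
    0 ≤ nodeKL μ S w := by
  simpa using hμ.mul_log_add_mul_log_le_nodeKL hS.1 hpos (x₀ := 0) (x₁ := 0) (by norm_num) (by norm_num)
    (by simpa using hS.2.2 w)

lemma nodeLoss_sub_le {n : ℕ} {ℓ : ℕ → Bool → Bool → ℝ} {μ S : List Bool → ℝ}
    {Λμ ΛS : List Bool → Bool} (hμ : IsMeasure μ) (hS : IsSemimeasure S)
    (hℓ : ∀ t y b, 0 ≤ ℓ t y b ∧ ℓ t y b ≤ 1)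
    (hSpos : ∀ x : List Bool, x.length ≤ n → 0 < μ x → 0 < S x)
    (hΛS : IsPredictor n ℓ S ΛS) {w : List Bool} (hw : w.length < n)
    {κ : ℝ} (hκ₀ : 0 < κ) (hκ₁ : κ < 1) :
    nodeLoss ℓ μ ΛS w - nodeLoss ℓ μ Λμ w ≤
      2 * nodeKL μ S w / (κ * (2 - κ)) + κ * nodeLoss ℓ μ Λμ w / (1 - κ) := by
  set δ := fun b ↦ ℓ (w.length + 1) b (ΛS w) - ℓ (w.length + 1) b (Λμ w)
  have hδ : ∀ b, |δ b| ≤ 1 := fun b ↦ abs_sub_le_of_nonneg_of_le (hℓ _ _ _).1 (hℓ _ _ _).2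
    (hℓ _ _ _).1 (hℓ _ _ _).2
  have hδ_neg : ∀ b, (δ b)⁻ ≤ ℓ (w.length + 1) b (Λμ w) := fun b ↦ by
    rw [negPart_def]
    exact sup_le (by simp only [δ]; linarith [(hℓ (w.length + 1) b (ΛS w)).1]) (hℓ _ _ _).1
  have hκδ : ∀ b, -1 < κ * δ b := fun b ↦ by
    nlinarith [neg_abs_le (δ b), hδ b]
  have hK := hμ.mul_log_add_mul_log_le_nodeKL hS.1 (w := w) (fun x hx ↦ hSpos x (by omega))
    (hκδ false) (hκδ true) (by nlinarith [hS.2.2 w, hΛS.mul_sub_add_mul_sub_nonpos hS hw (Λμ w)])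
  have := mul_add_mul_le_of_log_le (hμ.nonneg _) (hμ.nonneg _) (hδ false) (hδ true) hκ₀ hκ₁ hK
    (add_le_add (mul_le_mul_of_nonneg_left (hδ_neg false) (hμ.nonneg _))
      (mul_le_mul_of_nonneg_left (hδ_neg true) (hμ.nonneg _)))
  simp only [nodeLoss, δ] at this ⊢
  linarith

lemma mul_log_div_le_of_dom {m s g c d : ℝ} (hm : 0 ≤ m) (hc : 0 < c) (hg : 0 < g)
    (h : 0 < m → c * m / g ^ d ≤ s) : m * log (m / s) ≤ m * (d * log g - log c) := by
  rcases hm.eq_or_lt with rfl | hm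
  · simp
  have hgd : 0 < g ^ d := rpow_pos_of_pos hg d
  have hs : 0 < s := (by positivity : 0 < c * m / g ^ d).trans_le (h hm)
  have hle : m / s ≤ g ^ d / c := by
    rw [div_le_div_iff₀ hs hc]
    have := h hm
    rw [div_le_iff₀ hgd] at this
    linarith
  calc m * log (m / s) ≤ m * log (g ^ d / c) := by gcongr
    _ = m * (d * log g - log c) := by rw [log_div hgd.ne' hc.ne', log_rpow hg]

lemma IsMeasure.sum_mul_neg_logb_le {μ : List Bool → ℝ} (hμ : IsMeasure μ) (n : ℕ) :
    ∑ v : Fin n → Bool, μ (List.ofFn v) * -logb 2 (μ (List.ofFn v)) ≤ n := by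
  -- Gibbs' inequality against the uniform distribution `2⁻¹ ^ n`
  have gibbs : ∀ x, μ x - 2⁻¹ ^ n ≤ μ x * log (μ x) + μ x * (n * log 2) := fun x ↦ by
    have h := sub_le_mul_log_div (hμ.nonneg x) (by positivity : (0:ℝ) ≤ 2⁻¹ ^ n)
      fun _ ↦ by positivity
    rwa [← one_mul ((2:ℝ)⁻¹ ^ n), mul_log_div_mul (hμ.nonneg x) (fun _ ↦ one_pos) (by positivity),
      div_one, log_pow, log_inv, one_mul, mul_neg, mul_neg, sub_neg_eq_add] at h
  have hsum := sum_le_sum fun (v : Fin n → Bool) (_ : v ∈ univ) ↦ gibbs (List.ofFn v)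
  rw [sum_sub_distrib, sum_add_distrib, ← sum_mul, hμ.sum_ofFn, sum_const, card_univ,
    Fintype.card_fun, Fintype.card_bool, Fintype.card_fin, nsmul_eq_mul] at hsum
  have hlog2 : 0 < log 2 := log_pos one_lt_two
  have hlogb : ∀ x, μ x * -logb 2 (μ x) = -(μ x * log (μ x)) / log 2 := fun x ↦ by
    rw [logb, mul_neg, neg_div, mul_div_assoc]
  have hunif : ((2 ^ n : ℕ) : ℝ) * 2⁻¹ ^ n = 1 := by push_cast; rw [← mul_pow]; norm_num
  simp only [hlogb, ← sum_div, sum_neg_distrib]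
  rw [div_le_iff₀ hlog2]
  linarith

lemma IsMeasure.sum_klTerm_le {μ S : List Bool → ℝ} (hμ : IsMeasure μ) {n : ℕ} {a b c d : ℝ}
    (hc : 0 < c) (ha : 1 ≤ a) (hb : 0 ≤ b) (hd : 0 ≤ d)
    (hdom : ∀ x : List Bool, x.length = n → 0 < μ x →
      c * μ x / (a + b * (-logb 2 (μ x))) ^ d ≤ S x) :
    ∑ v : Fin n → Bool, klTerm μ S (List.ofFn v) ≤ d * log (a + b * n) - log c := by
  set G := fun x ↦ a + b * -logb 2 (μ x)
  have hG : ∀ x, 1 ≤ G x := fun x ↦ by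
    have := logb_nonpos one_lt_two (hμ.nonneg x) (hμ.le_one x)
    have : 0 ≤ b * -logb 2 (μ x) := mul_nonneg hb (by linarith)
    simp only [G]
    linarith
  have hmean₁ : 1 ≤ ∑ v : Fin n → Bool, μ (List.ofFn v) * G (List.ofFn v) := by
    calc (1 : ℝ) = ∑ v : Fin n → Bool, μ (List.ofFn v) * 1 := by simp [hμ.sum_ofFn]
      _ ≤ _ := by gcongr with v; exacts [hμ.nonneg _, hG _]
  have hmean : ∑ v : Fin n → Bool, μ (List.ofFn v) * G (List.ofFn v) ≤ a + b * n := by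
    simp only [G, mul_add, mul_left_comm _ b, sum_add_distrib, ← mul_sum, ← sum_mul, hμ.sum_ofFn,
      one_mul]
    linarith [mul_le_mul_of_nonneg_left (hμ.sum_mul_neg_logb_le n) hb]
  have jensen : ∑ v : Fin n → Bool, μ (List.ofFn v) * log (G (List.ofFn v)) ≤
      log (∑ v : Fin n → Bool, μ (List.ofFn v) * G (List.ofFn v)) := by
    simpa using strictConcaveOn_log_Ioi.concaveOn.le_map_sum (t := univ)
      (fun v _ ↦ hμ.nonneg (List.ofFn v)) (hμ.sum_ofFn n)
      (fun v _ ↦ (zero_lt_one.trans_le (hG (List.ofFn v)) : G (List.ofFn v) ∈ Set.Ioi 0))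
  calc ∑ v : Fin n → Bool, klTerm μ S (List.ofFn v)
      ≤ ∑ v : Fin n → Bool, μ (List.ofFn v) * (d * log (G (List.ofFn v)) - log c) :=
        sum_le_sum fun v _ ↦ mul_log_div_le_of_dom (hμ.nonneg _) hc
          (zero_lt_one.trans_le (hG _)) (hdom _ (by simp))
    _ = d * ∑ v : Fin n → Bool, μ (List.ofFn v) * log (G (List.ofFn v)) - log c := by
        simp only [mul_sub, sum_sub_distrib, ← sum_mul, hμ.sum_ofFn, one_mul, mul_sum,
          mul_left_comm d]
    _ ≤ d * log (a + b * n) - log c := by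
        gcongr
        exact jensen.trans (log_le_log (zero_lt_one.trans_le hmean₁) hmean)

lemma sum_range_sum_nodeKL_le {n : ℕ} {μ S : List Bool → ℝ} (hμ : IsMeasure μ)
    (hS : IsSemimeasure S) (hSpos : ∀ x : List Bool, x.length ≤ n → 0 < μ x → 0 < S x)
    {a b c d : ℝ} (hc : 0 < c) (ha : 1 ≤ a) (hb : 0 ≤ b) (hd : 0 ≤ d)
    (hdom : ∀ x : List Bool, x.length = n → 0 < μ x →
      c * μ x / (a + b * (-logb 2 (μ x))) ^ d ≤ S x) :
    ∑ t ∈ range n, ∑ v : Fin t → Bool, nodeKL μ S (List.ofFn v) ≤ d * log (a + b * n) - log c := by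
  have hroot : 0 ≤ klTerm μ S [] := by
    have := hSpos [] (by simp) (by simp [hμ.2.1])
    simpa [klTerm, hμ.2.1] using log_nonpos this.le hS.2.1
  rw [sum_range_sum_nodeKL]
  linarith [hμ.sum_klTerm_le hc ha hb hd hdom]

lemma sum_range_sum_nodeKL_nonneg {n : ℕ} {μ S : List Bool → ℝ} (hμ : IsMeasure μ)
    (hS : IsSemimeasure S) (hSpos : ∀ x : List Bool, x.length ≤ n → 0 < μ x → 0 < S x) :
    0 ≤ ∑ t ∈ range n, ∑ v : Fin t → Bool, nodeKL μ S (List.ofFn v) :=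
  sum_nonneg fun t ht ↦ sum_nonneg fun v _ ↦ hμ.nodeKL_nonneg hS fun x hx ↦
    hSpos x (by simp only [List.length_ofFn, mem_range] at hx ht; omega)

lemma loss_sub_loss_le {n : ℕ} {ℓ : ℕ → Bool → Bool → ℝ} {μ S : List Bool → ℝ}
    {Λμ ΛS : List Bool → Bool} (hμ : IsMeasure μ) (hS : IsSemimeasure S)
    (hℓ : ∀ t y b, 0 ≤ ℓ t y b ∧ ℓ t y b ≤ 1)
    (hSpos : ∀ x : List Bool, x.length ≤ n → 0 < μ x → 0 < S x)
    (hΛS : IsPredictor n ℓ S ΛS) {κ : ℝ} (hκ₀ : 0 < κ) (hκ₁ : κ < 1) :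
    Loss n ℓ μ ΛS - Loss n ℓ μ Λμ ≤
      2 * (∑ t ∈ range n, ∑ v : Fin t → Bool, nodeKL μ S (List.ofFn v)) / (κ * (2 - κ)) +
        κ * Loss n ℓ μ Λμ / (1 - κ) := by
  simp only [hμ.loss_eq_sum_nodeLoss, ← sum_sub_distrib, mul_sum, sum_div, ← sum_add_distrib]
  gcongr with t ht v
  exact nodeLoss_sub_le hμ hS hℓ hSpos hΛS (by simpa using ht) hκ₀ hκ₁

theorem stmt_7_general (n : ℕ) (μ S : List Bool → ℝ) (ℓ : ℕ → Bool → Bool → ℝ)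
    (c a b d : ℝ) (Λμ ΛS : List Bool → Bool)
    (hμ : IsMeasure μ) (hS : IsSemimeasure S)
    (hℓ : ∀ t y b, 0 ≤ ℓ t y b ∧ ℓ t y b ≤ 1)
    (hSpos : ∀ x : List Bool, x.length ≤ n → 0 < μ x → 0 < S x)
    (hc : 0 < c) (ha : 1 ≤ a) (hb : 0 ≤ b) (hd : 1 ≤ d)
    (hdom : ∀ x : List Bool, x.length = n → 0 < μ x →
      c * μ x / (a + b * (-Real.logb 2 (μ x))) ^ d ≤ S x)
    (hΛS : IsPredictor n ℓ S ΛS) :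
    Loss n ℓ μ ΛS - Loss n ℓ μ Λμ ≤
      2 * (d * Real.log (a + b * n) - Real.log c) +
        2 * Real.sqrt (Loss n ℓ μ Λμ * (d * Real.log (a + b * n) - Real.log c)) := by
  have hKD := sum_range_sum_nodeKL_le hμ hS hSpos hc ha hb (by linarith) hdom
  have hL : 0 ≤ Loss n ℓ μ Λμ :=
    sum_nonneg fun v _ ↦ mul_nonneg (hμ.nonneg _) (sum_nonneg fun t _ ↦ (hℓ _ _ _).1)
  refine le_two_mul_add_two_sqrt_of_forall_kappa
    ((sum_range_sum_nodeKL_nonneg hμ hS hSpos).trans hKD) hL fun κ hκ₀ hκ₁ ↦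
      (loss_sub_loss_le hμ hS hℓ hSpos hΛS hκ₀ hκ₁).trans ?_
  have : 0 < κ * (2 - κ) := by nlinarith
  gcongr

/-- Theorem 1 of the paper (loss bound for speed-prior-based prediction), stated
abstractly: if the semimeasure `S` dominates the measure `μ` on strings of
length `n` in the sense `S(x) ≥ c·μ(x)/(a + b·(−log₂ μ(x)))^d`, then any
`S`-predictor `Λ_S` satisfies
`L^{Λ_S}_{nμ} − L^{Λ_μ}_{nμ} ≤ 2·D_n + 2·√(L^{Λ_μ}_{nμ}·D_n)` with
`D_n = d·ln(a + b·n) − ln c`, for any `μ`-predictor `Λ_μ`. -/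
theorem stmt_7 (n : ℕ) (μ S : List Bool → ℝ) (ℓ : ℕ → Bool → Bool → ℝ)
    (c a b d : ℝ) (Λμ ΛS : List Bool → Bool)
    (hμ : IsMeasure μ) (hS : IsSemimeasure S)
    (hℓ : ∀ t y b, 0 ≤ ℓ t y b ∧ ℓ t y b ≤ 1)
    (hSpos : ∀ x : List Bool, x.length ≤ n → 0 < μ x → 0 < S x)
    (hc : 0 < c) (ha : 1 ≤ a) (hb : 0 ≤ b) (hd : 1 ≤ d)
    (hdom : ∀ x : List Bool, x.length = n → 0 < μ x →
      c * μ x / (a + b * (-Real.logb 2 (μ x))) ^ d ≤ S x)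
    (hΛμ : IsPredictor n ℓ μ Λμ) (hΛS : IsPredictor n ℓ S ΛS) :
    Loss n ℓ μ ΛS - Loss n ℓ μ Λμ ≤
      2 * (d * Real.log (a + b * n) - Real.log c) +
        2 * Real.sqrt (Loss n ℓ μ Λμ * (d * Real.log (a + b * n) - Real.log c)) :=
  stmt_7_general n μ S ℓ c a b d Λμ ΛS hμ hS hℓ hSpos hc ha hb hd hdom hΛS
end

section
/- Let S be a semimeasure and x_{1:∞} an infinite binary sequence such that S(x_{1:n}) ≥ c/(a + b·n)^d for all n ∈ ℕ, where c > 0, a ≥ 1, b ≥ 0, d ≥ 0. Then for every n, the number of indices t ∈ {1,…,n} with S(x_{1:t}) ≤ S(x_{1:t−1})/2 is at most d·log₂(a + b·n) − log₂ c. -/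
open Finset

theorem IsSemimeasure.apply_append_singleton_le {ν : List Bool → ℝ} (hν : IsSemimeasure ν)
    (l : List Bool) (b : Bool) : ν (l ++ [b]) ≤ ν l := by
  obtain ⟨hnonneg, -, hsplit⟩ := hν
  cases b
  · linarith [hsplit l, hnonneg (l ++ [true])]
  · linarith [hsplit l, hnonneg (l ++ [false])]

theorem IsSemimeasure.antitone_apply_ofFn {ν : List Bool → ℝ} (hν : IsSemimeasure ν)
    (x : ℕ → Bool) : Antitone fun n => ν (List.ofFn fun i : Fin n => x i) := by
  refine antitone_nat_of_succ_le fun n => ?_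
  have hsnoc :
      (List.ofFn fun i : Fin (n + 1) => x i) = (List.ofFn fun i : Fin n => x i) ++ [x n] := by
    rw [List.ofFn_succ']
    simp [List.concat_eq_append]
  simpa only [hsnoc] using hν.apply_append_singleton_le _ (x n)

theorem Antitone.le_div_two_pow_card_halvings {s : ℕ → ℝ} (hs : Antitone s) (n : ℕ) :
    s n ≤ s 0 / 2 ^ ((range n).filter fun t => s (t + 1) ≤ s t / 2).card := by
  induction n with
  | zero => simp
  | succ m ih =>
    rw [range_add_one, filter_insert]
    split_ifs with hhalf
    · rw [card_insert_of_notMem (by simp), pow_succ, ← div_div]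
      linarith
    · exact (hs m.le_succ).trans ih

theorem Real.natCast_le_neg_logb_two_of_le_inv_two_pow {y : ℝ} {k : ℕ} (hy : 0 < y)
    (hle : y ≤ (2 ^ k)⁻¹) : (k : ℝ) ≤ -Real.logb 2 y := by
  rw [← Real.logb_inv, Real.le_logb_iff_rpow_le one_lt_two (inv_pos.mpr hy), Real.rpow_natCast]
  exact le_inv_of_le_inv₀ hy hle

theorem stmt_8_general (S : List Bool → ℝ) (x : ℕ → Bool) (c a b d : ℝ)
    (hS : IsSemimeasure S)
    (hc : 0 < c) (ha : 1 ≤ a) (hb : 0 ≤ b)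
    (hlb : ∀ n : ℕ, c / (a + b * n) ^ d ≤ S (List.ofFn fun i : Fin n => x i)) :
    ∀ n : ℕ,
      (((Finset.range n).filter fun t =>
          S (List.ofFn fun i : Fin (t + 1) => x i) ≤
            S (List.ofFn fun i : Fin t => x i) / 2).card : ℝ) ≤
        d * Real.logb 2 (a + b * n) - Real.logb 2 c := by
  intro n
  have hbase : 0 < a + b * n := by positivity
  have hlower : 0 < c / (a + b * n) ^ d := div_pos hc (Real.rpow_pos_of_pos hbase d)
  have hupper := (hS.antitone_apply_ofFn x).le_div_two_pow_card_halvings n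
  have hempty : S (List.ofFn fun i : Fin 0 => x i) ≤ 1 := by simpa using hS.2.1
  calc _ ≤ -Real.logb 2 (c / (a + b * n) ^ d) :=
        Real.natCast_le_neg_logb_two_of_le_inv_two_pow hlower <| (hlb n).trans <|
          hupper.trans <| by rw [inv_eq_one_div]; gcongr
    _ = d * Real.logb 2 (a + b * n) - Real.logb 2 c := by
        rw [Real.logb_div hc.ne' (Real.rpow_pos_of_pos hbase d).ne',
          Real.logb_rpow_eq_mul_logb_of_pos hbase]
        ring

/-- The core of the Corollary to Theorem 1 and of Theorem 2 of the paper: if a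
semimeasure `S` satisfies `S(x_{1:n}) ≥ c/(a + b·n)^d` along the sequence
`x_{1:∞}`, then for every `n` the number of indices `t ∈ {1,…,n}` with
`S(x_{1:t}) ≤ S(x_{1:t−1})/2` is at most `d·log₂(a + b·n) − log₂ c`. -/
theorem stmt_8 (S : List Bool → ℝ) (x : ℕ → Bool) (c a b d : ℝ)
    (hS : IsSemimeasure S)
    (hc : 0 < c) (ha : 1 ≤ a) (hb : 0 ≤ b) (hd : 0 ≤ d)
    (hlb : ∀ n : ℕ, c / (a + b * n) ^ d ≤ S (List.ofFn fun i : Fin n => x i)) :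
    ∀ n : ℕ,
      (((Finset.range n).filter fun t =>
          S (List.ofFn fun i : Fin (t + 1) => x i) ≤
            S (List.ofFn fun i : Fin t => x i) / 2).card : ℝ) ≤
        d * Real.logb 2 (a + b * n) - Real.logb 2 c :=
  stmt_8_general S x c a b d hS hc ha hb hlb
end

section
/- Let ρ be a semimeasure and x_{1:∞} an infinite binary sequence with ρ(x_{1:n}) > 0. Then Σ_{t=1}^n (1 − ρ(x_t|x_{1:t−1})) ≤ −ln ρ(x_{1:n}). Consequently, if ρ(x_{1:n}) ≥ c/(a + b·n)^d with c > 0, a ≥ 1, b ≥ 0, d ≥ 0, then Σ_{t=1}^n |1 − ρ(x_t|x_{1:t−1})| ≤ d·ln(a + b·n) − ln c. -/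
/-! Each step satisfies `1 - r ≤ -ln r` for the conditional probability `r = ρ(x_t|x_{1:t-1})`,
so the sum telescopes to `ln ρ(ε) - ln ρ(x_{1:n}) ≤ -ln ρ(x_{1:n})`. Since a semimeasure is
antitone along prefixes, `r ≤ 1`, so the absolute values change nothing, and the polynomial lower
bound on `ρ(x_{1:n})` turns `-ln ρ(x_{1:n})` into `d·ln(a + b·n) - ln c`. -/

open Finset Real

theorem List.ofFn_coe_succ {α : Type*} (x : ℕ → α) (t : ℕ) :
    (List.ofFn fun i : Fin (t + 1) => x i) = (List.ofFn fun i : Fin t => x i) ++ [x t] := by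
  rw [List.ofFn_succ']
  simp

theorem Real.one_sub_div_le_log_sub_log {x y : ℝ} (hx : 0 < x) (hy : 0 < y) :
    1 - y / x ≤ log x - log y := by
  simpa [inv_div, log_div hx.ne' hy.ne'] using one_sub_inv_le_log_of_pos (div_pos hx hy)

theorem Real.sum_range_one_sub_div_le_log_sub_log {f : ℕ → ℝ} {n : ℕ} (hf : ∀ t ≤ n, 0 < f t) :
    ∑ t ∈ range n, (1 - f (t + 1) / f t) ≤ log (f 0) - log (f n) := by
  rw [← sum_range_sub' (fun t => log (f t))]
  refine sum_le_sum fun t ht => ?_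
  have ht := mem_range.1 ht
  exact one_sub_div_le_log_sub_log (hf t ht.le) (hf (t + 1) ht)

theorem Real.neg_log_le_of_div_rpow_le {p c A d : ℝ} (hc : 0 < c) (hA : 0 < A)
    (h : c / A ^ d ≤ p) : -log p ≤ d * log A - log c := by
  have hAd := rpow_pos_of_pos hA d
  have := log_le_log (div_pos hc hAd) h
  rw [log_div hc.ne' hAd.ne', log_rpow hA] at this
  linarith

namespace IsSemimeasure

variable {ν : List Bool → ℝ}

theorem apply_append_singleton_le_s9 (hν : IsSemimeasure ν) (w : List Bool) (b : Bool) :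
    ν (w ++ [b]) ≤ ν w := by
  obtain ⟨hnn, -, hsub⟩ := hν
  cases b <;> linarith [hsub w, hnn (w ++ [false]), hnn (w ++ [true])]

theorem antitone_apply_ofFn_s9 (hν : IsSemimeasure ν) (x : ℕ → Bool) :
    Antitone fun t => ν (List.ofFn fun i : Fin t => x i) :=
  antitone_nat_of_succ_le fun t => by
    simpa only [List.ofFn_coe_succ] using hν.apply_append_singleton_le_s9 _ (x t)

end IsSemimeasure

/-- Lemma 10 of the paper, in abstract form: for a semimeasure `ρ` with
`ρ(x_{1:n}) > 0`, `∑_{t=1}^n (1 − ρ(x_t|x_{1:t−1})) ≤ −ln ρ(x_{1:n})`;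
consequently, if `ρ(x_{1:n}) ≥ c/(a + b·n)^d`, then
`∑_{t=1}^n |1 − ρ(x_t|x_{1:t−1})| ≤ d·ln(a + b·n) − ln c`. -/
theorem stmt_9 (ρ : List Bool → ℝ) (x : ℕ → Bool) (n : ℕ)
    (hρ : IsSemimeasure ρ)
    (hpos : 0 < ρ (List.ofFn fun i : Fin n => x i)) :
    (∑ t ∈ Finset.range n,
        (1 - ρ (List.ofFn fun i : Fin (t + 1) => x i) /
          ρ (List.ofFn fun i : Fin t => x i))) ≤
      -Real.log (ρ (List.ofFn fun i : Fin n => x i)) ∧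
    ∀ c a b d : ℝ, 0 < c → 1 ≤ a → 0 ≤ b → 0 ≤ d →
      c / (a + b * n) ^ d ≤ ρ (List.ofFn fun i : Fin n => x i) →
      (∑ t ∈ Finset.range n,
          |1 - ρ (List.ofFn fun i : Fin (t + 1) => x i) /
            ρ (List.ofFn fun i : Fin t => x i)|) ≤
        d * Real.log (a + b * n) - Real.log c := by
  have hanti := hρ.antitone_apply_ofFn_s9 x
  have hsum := sum_range_one_sub_div_le_log_sub_log fun t ht => hpos.trans_le (hanti ht)
  have hlog_nil : log (ρ []) ≤ 0 := log_nonpos (hρ.1 []) hρ.2.1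
  simp only [List.ofFn_zero] at hsum
  refine ⟨by linarith, fun c a b d hc ha hb _ hbound => ?_⟩
  have hratio_le_one (t : ℕ) : ρ (List.ofFn fun i : Fin (t + 1) => x i) /
      ρ (List.ofFn fun i : Fin t => x i) ≤ 1 :=
    div_le_one_of_le₀ (hanti t.le_succ) (hρ.1 _)
  simp only [abs_of_nonneg (sub_nonneg.2 (hratio_le_one _))]
  have := neg_log_le_of_div_rpow_le hc (by positivity) hbound
  linarith
end

section
/- Let P be a prefix-free set of finite binary strings and t : P → [1,∞) a function with t(p) ≥ |p| for every p ∈ P, and let k ∈ ℕ. Then Σ_{p ∈ P, |p| > k or t(p) > 2^k} 2^{-|p|}/t(p) ≤ 2^{-k} + 1/(k+1) ≤ 2/(k+1). -/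
/-!
Split the tail into the programs with `|p| > k`, for which `t p ≥ |p| ≥ k + 1`, and those with
`t p > 2^k`. On each part `1 / t p` is bounded by a constant, and what remains is the Kraft sum
of a prefix-free set, which is at most `1` because a prefix-free code not containing the empty
word is uniquely decodable, so the Kraft–McMillan inequality applies. Finally `k + 1 ≤ 2^k`.
-/

def PrefixFree (P : Set (List Bool)) : Prop :=
  ∀ p ∈ P, ∀ q ∈ P, p <+: q → p = q

open scoped ENNReal
open InformationTheory

namespace PrefixFree

variable {P : Set (List Bool)}

theorem subset (hP : PrefixFree P) {S : Set (List Bool)} (hS : S ⊆ P) : PrefixFree S :=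
  fun p hp q hq => hP p (hS hp) q (hS hq)

theorem uniquelyDecodable (hP : PrefixFree P) (hnil : [] ∉ P) : UniquelyDecodable P := by
  intro L₁ L₂ h₁ h₂ h
  induction L₁ generalizing L₂ with
  | nil =>
    cases L₂ with
    | nil => rfl
    | cons v L₂ =>
      have hv : v = [] := (by simpa using h.symm : v = [] ∧ _).1
      exact absurd (hv ▸ h₂ v List.mem_cons_self) hnil
  | cons w L₁ ih =>
    cases L₂ with
    | nil =>
      have hw : w = [] := (by simpa using h : w = [] ∧ _).1
      exact absurd (hw ▸ h₁ w List.mem_cons_self) hnil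
    | cons v L₂ =>
      simp only [List.flatten_cons] at h
      have hw : w ∈ P := h₁ w List.mem_cons_self
      have hv : v ∈ P := h₂ v List.mem_cons_self
      have hwv : w = v := by
        rcases List.prefix_or_prefix_of_prefix (List.prefix_append w _)
            (h ▸ List.prefix_append v _) with hle | hle
        · exact hP w hw v hv hle
        · exact (hP v hv w hw hle).symm
      subst hwv
      rw [ih L₂ (fun u hu => h₁ u (List.mem_cons_of_mem _ hu))
        (fun u hu => h₂ u (List.mem_cons_of_mem _ hu)) (List.append_cancel_left h)]

theorem eq_singleton_nil (hP : PrefixFree P) (hnil : [] ∈ P) : P = {[]} :=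
  Set.eq_singleton_iff_unique_mem.mpr
    ⟨hnil, fun q hq => (hP [] hnil q hq List.nil_prefix).symm⟩

theorem sum_inv_two_pow_length_le_one {F : Finset (List Bool)} (hF : PrefixFree F) :
    ∑ p ∈ F, ((2 : ℝ≥0∞) ^ p.length)⁻¹ ≤ 1 := by
  by_cases hnil : [] ∈ F
  · rw [Finset.coe_eq_singleton.mp (hF.eq_singleton_nil hnil)]
    simp
  have hreal := kraft_mcmillan_inequality (hF.uniquelyDecodable hnil)
  simp only [Fintype.card_bool, Nat.cast_ofNat, one_div, inv_pow] at hreal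
  calc ∑ p ∈ F, ((2 : ℝ≥0∞) ^ p.length)⁻¹
      = ENNReal.ofReal (∑ p ∈ F, ((2 : ℝ) ^ p.length)⁻¹) := by
        rw [ENNReal.ofReal_sum_of_nonneg (fun _ _ => by positivity)]
        refine Finset.sum_congr rfl fun p _ => ?_
        rw [ENNReal.ofReal_inv_of_pos (by positivity), ENNReal.ofReal_pow zero_le_two]
        simp
    _ ≤ 1 := ENNReal.ofReal_le_one.mpr hreal

theorem tsum_inv_two_pow_length_le_one (hP : PrefixFree P) :
    ∑' p : P, ((2 : ℝ≥0∞) ^ p.1.length)⁻¹ ≤ 1 := by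
  rw [ENNReal.tsum_eq_iSup_sum]
  refine iSup_le fun s => ?_
  simpa using sum_inv_two_pow_length_le_one (F := s.map (Function.Embedding.subtype _))
    (hP.subset (by simp))

theorem tsum_inv_two_pow_length_div_le (hP : PrefixFree P) {t : List Bool → ℝ≥0∞} {c : ℝ≥0∞}
    (hc : ∀ p ∈ P, c ≤ t p) :
    ∑' p : P, ((2 : ℝ≥0∞) ^ p.1.length)⁻¹ / t p ≤ c⁻¹ :=
  calc ∑' p : P, ((2 : ℝ≥0∞) ^ p.1.length)⁻¹ / t p
      ≤ ∑' p : P, ((2 : ℝ≥0∞) ^ p.1.length)⁻¹ * c⁻¹ :=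
        ENNReal.tsum_le_tsum fun p => ENNReal.div_le_div_left (hc p p.2) _
    _ = (∑' p : P, ((2 : ℝ≥0∞) ^ p.1.length)⁻¹) * c⁻¹ := ENNReal.tsum_mul_right
    _ ≤ c⁻¹ := mul_le_of_le_one_left zero_le hP.tsum_inv_two_pow_length_le_one

end PrefixFree

theorem inv_two_pow_add_inv_succ_le (k : ℕ) :
    ((2 : ℝ≥0∞) ^ k)⁻¹ + ((k : ℝ≥0∞) + 1)⁻¹ ≤ 2 / ((k : ℝ≥0∞) + 1) := by
  have hk : (k : ℝ≥0∞) + 1 ≤ 2 ^ k := by exact_mod_cast Nat.lt_two_pow_self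
  calc ((2 : ℝ≥0∞) ^ k)⁻¹ + ((k : ℝ≥0∞) + 1)⁻¹
      ≤ ((k : ℝ≥0∞) + 1)⁻¹ + ((k : ℝ≥0∞) + 1)⁻¹ := by gcongr
    _ = 2 / ((k : ℝ≥0∞) + 1) := by rw [← two_mul, div_eq_mul_inv]

theorem stmt_11_general (P : Set (List Bool)) (t : List Bool → NNReal) (k : ℕ)
    (hP : PrefixFree P)
    (htlen : ∀ p ∈ P, (p.length : NNReal) ≤ t p) :
    (∑' p : {p : List Bool // p ∈ P ∧ (k < p.length ∨ (2 : NNReal) ^ k < t p)},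
        ((2 : ENNReal) ^ p.val.length)⁻¹ / (t p.val : ENNReal)) ≤
      ((2 : ENNReal) ^ k)⁻¹ + ((k : ENNReal) + 1)⁻¹ ∧
    ((2 : ENNReal) ^ k)⁻¹ + ((k : ENNReal) + 1)⁻¹ ≤ 2 / ((k : ENNReal) + 1) := by
  set f : List Bool → ℝ≥0∞ := fun p => ((2 : ℝ≥0∞) ^ p.length)⁻¹ / (t p : ℝ≥0∞)
  set long : Set (List Bool) := {p ∈ P | k < p.length}
  set slow : Set (List Bool) := {p ∈ P | (2 : NNReal) ^ k < t p}
  have hlong : ∑' p : long, f p ≤ ((k : ℝ≥0∞) + 1)⁻¹ := by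
    refine PrefixFree.tsum_inv_two_pow_length_div_le (P := long) (t := fun p => (t p : ℝ≥0∞))
      (hP.subset (Set.sep_subset _ _)) fun p hp => ?_
    have : ((k + 1 : ℕ) : NNReal) ≤ t p := (Nat.cast_le.mpr hp.2).trans (htlen p hp.1)
    exact_mod_cast this
  have hslow : ∑' p : slow, f p ≤ ((2 : ℝ≥0∞) ^ k)⁻¹ := by
    refine PrefixFree.tsum_inv_two_pow_length_div_le (P := slow) (t := fun p => (t p : ℝ≥0∞))
      (hP.subset (Set.sep_subset _ _)) fun p hp => ?_
    exact_mod_cast hp.2.le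
  refine ⟨?_, inv_two_pow_add_inv_succ_le k⟩
  calc ∑' p : {p // p ∈ P ∧ (k < p.length ∨ (2 : NNReal) ^ k < t p)}, f p
      ≤ ∑' p : ↑(long ∪ slow), f p :=
        ENNReal.tsum_mono_subtype f fun p ⟨hp, h⟩ => h.imp (⟨hp, ·⟩) (⟨hp, ·⟩)
    _ ≤ ∑' p : long, f p + ∑' p : slow, f p := ENNReal.tsum_union_le f long slow
    _ ≤ ((2 : ℝ≥0∞) ^ k)⁻¹ + ((k : ℝ≥0∞) + 1)⁻¹ :=
        (add_le_add hlong hslow).trans_eq (add_comm _ _)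

/-- The tail estimate in the proof of Theorem 4 of the paper: for a prefix-free
set `P` and running times `t(p) ≥ max(1, |p|)`, the contributions to
`∑_{p ∈ P} 2^{-|p|}/t(p)` from programs with `|p| > k` or `t(p) > 2^k` total at
most `2^{-k} + 1/(k+1) ≤ 2/(k+1)`. -/
theorem stmt_11 (P : Set (List Bool)) (t : List Bool → NNReal) (k : ℕ)
    (hP : PrefixFree P)
    (ht1 : ∀ p ∈ P, 1 ≤ t p)
    (htlen : ∀ p ∈ P, (p.length : NNReal) ≤ t p) :
    (∑' p : {p : List Bool // p ∈ P ∧ (k < p.length ∨ (2 : NNReal) ^ k < t p)},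
        ((2 : ENNReal) ^ p.val.length)⁻¹ / (t p.val : ENNReal)) ≤
      ((2 : ENNReal) ^ k)⁻¹ + ((k : ENNReal) + 1)⁻¹ ∧
    ((2 : ENNReal) ^ k)⁻¹ + ((k : ENNReal) + 1)⁻¹ ≤ 2 / ((k : ENNReal) + 1) :=
  stmt_11_general P t k hP htlen
end

section
/- Let ε ∈ (0, 1/3), and let ρ and σ be semimeasures with (1−ε)·ρ(x) ≤ σ(x) ≤ (1+ε)·ρ(x) for all finite binary strings x. Define the infinite binary sequence x_{1:∞} recursively by x_t = 1 if σ(x_{1:t−1}·0) ≥ σ(x_{1:t−1}·1) and x_t = 0 otherwise. If ρ(x_{1:n}) > 0 for all n, then for every n, Σ_{t=1}^n (1 − ρ(x_t|x_{1:t−1})) ≥ n·(1 − 3ε)/(2(1−ε)). Consequently there are no constants c > 0, a ≥ 1, b ≥ 0, d ≥ 0 such that ρ(x_{1:n}) ≥ c/(a + b·n)^d holds for all n. -/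
open Filter Topology Real

lemma List.ofFn_natCast_succ {α : Type*} (f : ℕ → α) (t : ℕ) :
    (List.ofFn fun i : Fin (t + 1) => f i) = (List.ofFn fun i : Fin t => f i) ++ [f t] := by
  rw [List.ofFn_succ']
  simp [List.concat_eq_append, Fin.last]

lemma IsSemimeasure.apply_append_le_half {σ : List Bool → ℝ} (hσ : IsSemimeasure σ)
    {w : List Bool} {b : Bool} (hb : b = true ↔ σ (w ++ [true]) ≤ σ (w ++ [false])) :
    σ (w ++ [b]) ≤ σ w / 2 := by
  have hsplit := hσ.2.2 w
  cases b with
  | true => linarith [hb.mp rfl]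
  | false =>
    have : σ (w ++ [false]) < σ (w ++ [true]) := by simpa using hb
    linarith

lemma div_le_of_apply_le_half {ε : ℝ} (hε : ε < 1) {ρ σ : List Bool → ℝ}
    (hlow : ∀ x, (1 - ε) * ρ x ≤ σ x) (hhigh : ∀ x, σ x ≤ (1 + ε) * ρ x)
    {w v : List Bool} (hw : 0 < ρ w) (hv : σ v ≤ σ w / 2) :
    ρ v / ρ w ≤ (1 + ε) / (2 * (1 - ε)) := by
  have h1ε : 0 < 1 - ε := by linarith
  rw [div_le_div_iff₀ hw (by positivity)]
  nlinarith [hlow v, hhigh w]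

lemma sum_one_sub_div_le_neg_log {f : ℕ → ℝ} (hf : ∀ n, 0 < f n) (hf0 : f 0 ≤ 1) (n : ℕ) :
    ∑ t ∈ Finset.range n, (1 - f (t + 1) / f t) ≤ -log (f n) := by
  induction n with
  | zero => simpa using log_nonpos (hf 0).le hf0
  | succ n ih =>
    have hstep := log_le_sub_one_of_pos (div_pos (hf (n + 1)) (hf n))
    rw [log_div (hf (n + 1)).ne' (hf n).ne'] at hstep
    rw [Finset.sum_range_succ]
    linarith

lemma le_exp_neg_sum_one_sub_div {f : ℕ → ℝ} (hf : ∀ n, 0 < f n) (hf0 : f 0 ≤ 1) (n : ℕ) :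
    f n ≤ exp (-∑ t ∈ Finset.range n, (1 - f (t + 1) / f t)) := by
  calc f n = exp (log (f n)) := (exp_log (hf n)).symm
    _ ≤ _ := exp_le_exp.mpr (by linarith [sum_one_sub_div_le_neg_log hf hf0 n])

lemma tendsto_add_mul_rpow_mul_exp_neg_mul {a b d δ : ℝ} (ha : 0 ≤ a) (hb : 0 ≤ b)
    (hd : 0 ≤ d) (hδ : 0 < δ) :
    Tendsto (fun y : ℝ => (a + b * y) ^ d * exp (-δ * y)) atTop (𝓝 0) := by
  have hlim := (tendsto_rpow_mul_exp_neg_mul_atTop_nhds_zero d δ hδ).const_mul ((a + b) ^ d)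
  rw [mul_zero] at hlim
  refine tendsto_of_tendsto_of_tendsto_of_le_of_le' tendsto_const_nhds hlim ?_ ?_
  · filter_upwards [eventually_ge_atTop 0] with y hy
    positivity
  · filter_upwards [eventually_ge_atTop 1] with y hy
    have hle : a + b * y ≤ (a + b) * y := by nlinarith
    calc (a + b * y) ^ d * exp (-δ * y) ≤ ((a + b) * y) ^ d * exp (-δ * y) := by
          gcongr
      _ = (a + b) ^ d * (y ^ d * exp (-δ * y)) := by
          rw [mul_rpow (by positivity) (by positivity), mul_assoc]

lemma not_forall_div_rpow_le_exp_neg_mul {a b c d δ : ℝ} (ha : 0 < a) (hb : 0 ≤ b)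
    (hc : 0 < c) (hd : 0 ≤ d) (hδ : 0 < δ) :
    ¬ ∀ n : ℕ, c / (a + b * n) ^ d ≤ exp (-δ * n) := by
  intro hbound
  have hlim := (tendsto_add_mul_rpow_mul_exp_neg_mul ha.le hb hd hδ).comp
    tendsto_natCast_atTop_atTop
  obtain ⟨n, hn⟩ := (hlim.eventually (eventually_lt_nhds hc)).exists
  have hpos : 0 < (a + b * n) ^ d := by positivity
  exact (((div_le_iff₀' hpos).mp (hbound n)).trans_lt hn).false

theorem stmt_13_general (ε : ℝ) (hε3 : ε < 1 / 3)
    (ρ σ : List Bool → ℝ)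
    (hρ : IsSemimeasure ρ) (hσ : IsSemimeasure σ)
    (hlow : ∀ x, (1 - ε) * ρ x ≤ σ x) (hhigh : ∀ x, σ x ≤ (1 + ε) * ρ x)
    (x : ℕ → Bool)
    (hx : ∀ t : ℕ, (x t = true ↔
      σ ((List.ofFn fun i : Fin t => x i) ++ [true]) ≤
        σ ((List.ofFn fun i : Fin t => x i) ++ [false])))
    (hpos : ∀ n : ℕ, 0 < ρ (List.ofFn fun i : Fin n => x i)) :
    (∀ n : ℕ, (n : ℝ) * (1 - 3 * ε) / (2 * (1 - ε)) ≤
      ∑ t ∈ Finset.range n,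
        (1 - ρ (List.ofFn fun i : Fin (t + 1) => x i) /
          ρ (List.ofFn fun i : Fin t => x i))) ∧
    ¬ ∃ c a b d : ℝ, 0 < c ∧ 1 ≤ a ∧ 0 ≤ b ∧ 0 ≤ d ∧
      ∀ n : ℕ, c / (a + b * n) ^ d ≤ ρ (List.ofFn fun i : Fin n => x i) := by
  have h1ε : 0 < 1 - ε := by linarith
  have hratio (t : ℕ) : ρ (List.ofFn fun i : Fin (t + 1) => x i) /
      ρ (List.ofFn fun i : Fin t => x i) ≤ (1 + ε) / (2 * (1 - ε)) := by
    rw [List.ofFn_natCast_succ]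
    exact div_le_of_apply_le_half (by linarith) hlow hhigh (hpos t)
      (hσ.apply_append_le_half (hx t))
  have hsum (n : ℕ) : (n : ℝ) * (1 - 3 * ε) / (2 * (1 - ε)) ≤ ∑ t ∈ Finset.range n,
      (1 - ρ (List.ofFn fun i : Fin (t + 1) => x i) / ρ (List.ofFn fun i : Fin t => x i)) := by
    calc (n : ℝ) * (1 - 3 * ε) / (2 * (1 - ε))
        = ∑ _t ∈ Finset.range n, (1 - (1 + ε) / (2 * (1 - ε))) := by
          rw [Finset.sum_const, Finset.card_range, nsmul_eq_mul]
          field_simp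
          ring
      _ ≤ _ := Finset.sum_le_sum fun t _ => by linarith [hratio t]
  refine ⟨hsum, ?_⟩
  rintro ⟨c, a, b, d, hc, ha, hb, hd, hbound⟩
  have hδ : 0 < (1 - 3 * ε) / (2 * (1 - ε)) := by apply div_pos <;> linarith
  refine not_forall_div_rpow_le_exp_neg_mul (zero_lt_one.trans_le ha) hb hc hd hδ fun n => ?_
  calc c / (a + b * n) ^ d ≤ ρ (List.ofFn fun i : Fin n => x i) := hbound n
    _ ≤ _ := le_exp_neg_sum_one_sub_div (f := fun n => ρ (List.ofFn fun i : Fin n => x i))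
          hpos hρ.2.1 n
    _ ≤ exp (-((1 - 3 * ε) / (2 * (1 - ε))) * n) := by
        rw [exp_le_exp, neg_mul, neg_le_neg_iff, mul_comm, ← mul_div_assoc]
        exact hsum n

/-- The adversarial-sequence argument at the heart of Theorem 7 of the paper:
if `σ` is an `ε`-approximation of the semimeasure `ρ` (with `ε < 1/3`) and the
sequence `x_{1:∞}` always takes the continuation `σ` deems less likely
(breaking ties with 1), then `∑_{t=1}^n (1 − ρ(x_t|x_{1:t−1})) ≥
n·(1−3ε)/(2(1−ε))`, so `ρ(x_{1:n})` cannot be bounded below by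
`c/(a + b·n)^d` for all `n`. -/
theorem stmt_13 (ε : ℝ) (hε0 : 0 < ε) (hε3 : ε < 1 / 3)
    (ρ σ : List Bool → ℝ)
    (hρ : IsSemimeasure ρ) (hσ : IsSemimeasure σ)
    (hlow : ∀ x, (1 - ε) * ρ x ≤ σ x) (hhigh : ∀ x, σ x ≤ (1 + ε) * ρ x)
    (x : ℕ → Bool)
    (hx : ∀ t : ℕ, (x t = true ↔
      σ ((List.ofFn fun i : Fin t => x i) ++ [true]) ≤
        σ ((List.ofFn fun i : Fin t => x i) ++ [false])))
    (hpos : ∀ n : ℕ, 0 < ρ (List.ofFn fun i : Fin n => x i)) :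
    (∀ n : ℕ, (n : ℝ) * (1 - 3 * ε) / (2 * (1 - ε)) ≤
      ∑ t ∈ Finset.range n,
        (1 - ρ (List.ofFn fun i : Fin (t + 1) => x i) /
          ρ (List.ofFn fun i : Fin t => x i))) ∧
    ¬ ∃ c a b d : ℝ, 0 < c ∧ 1 ≤ a ∧ 0 ≤ b ∧ 0 ≤ d ∧
      ∀ n : ℕ, c / (a + b * n) ^ d ≤ ρ (List.ofFn fun i : Fin n => x i) :=
  stmt_13_general ε hε3 ρ σ hρ hσ hlow hhigh x hx hpos
end
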